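/- Let V be an (ε, M, δ)-stabilizing ranking supermartingale for a stabilizing set X_s in a discrete-time stochastic system with maximal step size Δ, and let x_1 ∈ X satisfy M < V(x_1) ≤ M + L_V·Δ. Then the probability, starting from x_1, that the trajectory ever reaches a state with V ≥ M + L_V·Δ + δ before reaching the set S = {x : V(x) ≤ M} is at most (M + L_V·Δ)/(M + L_V·Δ + δ). -/

import Mathlib

open MeasureTheory Filter Finset
open scoped ENNReal

/-- The ℓ1 norm on `ℝ^n`. -/
noncomputable def l1norm {n : ℕ} (x : Fin n → ℝ) : ℝ := ∑ i, |x i|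

/-- Trajectory of the closed-loop system `x_{t+1} = f(x_t, π(x_t), ω_t)` driven by the i.i.d.
noise sequence `W`. -/
def traj {Xsp Nsp Ω : Type*} (step : Xsp → Nsp → Xsp) (W : ℕ → Ω → Nsp) (x0 : Xsp) (ω : Ω) :
    ℕ → Xsp
  | 0 => x0
  | t + 1 => step (traj step W x0 ω t) (W t ω)

/-!
Stop the chain the first time `V` leaves the interval `(M, λ)`, `λ = M + L_V·Δ + δ`. As the
noise `W t` is independent of the past, the decrease condition makes `V` of the stopped chain a
nonnegative supermartingale, so `E[V(x_t)] ≤ V(x_1)` for every `t`, and Markov's inequality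
bounds the probability that the stopped chain is above `λ` at time `t` by `V(x_1)/λ`. These
events increase with `t`, and their union contains the event of the theorem. Working with lower
integrals of `ofReal ∘ V` avoids any integrability question for the stopped chain.
-/

open ProbabilityTheory

lemma lintegral_comp_eq_lintegral_lintegral_of_indepFun {Ω α β : Type*} {mΩ : MeasurableSpace Ω}
    [MeasurableSpace α] [MeasurableSpace β] {μ : Measure Ω} [IsFiniteMeasure μ]
    {Y : Ω → α} {Z : Ω → β} (hind : IndepFun Y Z μ) (hY : Measurable Y) (hZ : Measurable Z)
    {g : α × β → ℝ≥0∞} (hg : Measurable g) :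
    ∫⁻ ω, g (Y ω, Z ω) ∂μ = ∫⁻ ω, ∫⁻ z, g (Y ω, z) ∂(μ.map Z) ∂μ := by
  calc ∫⁻ ω, g (Y ω, Z ω) ∂μ = ∫⁻ p, g p ∂(μ.map fun ω => (Y ω, Z ω)) :=
        (lintegral_map hg (hY.prodMk hZ)).symm
    _ = ∫⁻ p, g p ∂((μ.map Y).prod (μ.map Z)) := by
        rw [hind.map_prod_eq_prod_map_map hY.aemeasurable hZ.aemeasurable]
    _ = ∫⁻ y, ∫⁻ z, g (y, z) ∂(μ.map Z) ∂(μ.map Y) := lintegral_prod _ hg.aemeasurable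
    _ = ∫⁻ ω, ∫⁻ z, g (Y ω, z) ∂(μ.map Z) ∂μ := lintegral_map hg.lintegral_prod_right' hY

section NoiseDrivenChain

variable {X N Ω : Type*} {step : X → N → X} {W : ℕ → Ω → N}

lemma traj_mem {K : Set X} (hK : ∀ x ∈ K, ∀ n, step x n ∈ K) {x0 : X} (hx0 : x0 ∈ K) (ω : Ω) :
    ∀ t, traj step W x0 ω t ∈ K
  | 0 => hx0
  | t + 1 => hK _ (traj_mem hK hx0 ω t) _

open Classical in
noncomputable def stoppedStep (step : X → N → X) (S : Set X) (x : X) (n : N) : X :=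
  if x ∈ S then x else step x n

lemma stoppedStep_mem {K S : Set X} (hK : ∀ x ∈ K, ∀ n, step x n ∈ K) :
    ∀ x ∈ K, ∀ n, stoppedStep step S x n ∈ K := by
  intro x hx n
  unfold stoppedStep
  split_ifs
  exacts [hx, hK x hx n]

lemma traj_stoppedStep_eq {S : Set X} {x0 : X} {ω : Ω} {t : ℕ}
    (h : ∀ s < t, traj step W x0 ω s ∉ S) :
    traj (stoppedStep step S) W x0 ω t = traj step W x0 ω t := by
  induction t with
  | zero => rfl
  | succ t ih =>
    have hs := h t t.lt_succ_self
    rw [traj, traj, ih fun s hs => h s (Nat.lt_succ_of_lt hs), stoppedStep, if_neg hs]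

lemma traj_stoppedStep_succ_of_mem {S : Set X} {x0 : X} {ω : Ω} {t : ℕ}
    (h : traj (stoppedStep step S) W x0 ω t ∈ S) :
    traj (stoppedStep step S) W x0 ω (t + 1) = traj (stoppedStep step S) W x0 ω t := by
  rw [traj, stoppedStep, if_pos h]

lemma monotone_setOf_traj_stoppedStep_mem {S P : Set X} (hPS : P ⊆ S) (x0 : X) :
    Monotone fun t => {ω | traj (stoppedStep step S) W x0 ω t ∈ P} := by
  refine monotone_nat_of_le_succ fun t ω hω => ?_
  simpa only [Set.mem_ofPred_eq, traj_stoppedStep_succ_of_mem (hPS hω)] using hω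

lemma setOf_exists_hit_subset_iUnion (L P : Set X) (x0 : X) :
    {ω | ∃ t, traj step W x0 ω t ∈ P ∧ ∀ s ≤ t, traj step W x0 ω s ∉ L} ⊆
      ⋃ t, {ω | traj (stoppedStep step (L ∪ P)) W x0 ω t ∈ P} := by
  classical
  rintro ω ⟨t, hP, hL⟩
  have hhit : ∃ s, traj step W x0 ω s ∈ L ∪ P := ⟨t, Or.inr hP⟩
  refine Set.mem_iUnion.mpr ⟨Nat.find hhit, ?_⟩
  rw [Set.mem_ofPred_eq, traj_stoppedStep_eq fun s hs => Nat.find_min hhit hs]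
  exact (Nat.find_spec hhit).resolve_left (hL _ (Nat.find_le (Or.inr hP)))

variable [MeasurableSpace N] {d : Measure N}

lemma lintegral_stoppedStep_le [IsProbabilityMeasure d] {V : X → ℝ≥0∞} {K S : Set X}
    (hV : ∀ x ∈ K, x ∉ S → ∫⁻ n, V (step x n) ∂d ≤ V x) :
    ∀ x ∈ K, ∫⁻ n, V (stoppedStep step S x n) ∂d ≤ V x := by
  intro x hx
  by_cases hxS : x ∈ S
  · simp [stoppedStep, hxS]
  · simpa [stoppedStep, hxS] using hV x hx hxS

variable [MeasurableSpace X] {mΩ : MeasurableSpace Ω} {μ : Measure Ω}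

lemma measurable_stoppedStep {S : Set X} (hS : MeasurableSet S)
    (hstep : Measurable (Function.uncurry step)) :
    Measurable (Function.uncurry (stoppedStep step S)) :=
  Measurable.ite (measurable_fst hS) measurable_fst hstep

lemma measurable_traj_iSup_comap (hstep : Measurable (Function.uncurry step)) (x0 : X) (t : ℕ) :
    Measurable[⨆ i ∈ Set.Iio t, ‹MeasurableSpace N›.comap (W i)]
      fun ω => traj step W x0 ω t := by
  induction t with
  | zero => exact measurable_const
  | succ t ih =>
    have hle : ⨆ i ∈ Set.Iio t, ‹MeasurableSpace N›.comap (W i) ≤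
        ⨆ i ∈ Set.Iio (t + 1), ‹MeasurableSpace N›.comap (W i) :=
      biSup_mono fun i hi => Nat.lt_succ_of_lt hi
    have hWt : Measurable[⨆ i ∈ Set.Iio (t + 1), ‹MeasurableSpace N›.comap (W i)] (W t) :=
      (comap_measurable (W t)).mono (le_iSup₂_of_le t t.lt_succ_self le_rfl) le_rfl
    exact hstep.comp ((ih.mono hle le_rfl).prodMk hWt)

lemma measurable_traj (hstep : Measurable (Function.uncurry step)) (hW : ∀ t, Measurable (W t))
    (x0 : X) (t : ℕ) : Measurable fun ω => traj step W x0 ω t :=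
  have hle : ⨆ i ∈ Set.Iio t, ‹MeasurableSpace N›.comap (W i) ≤ mΩ :=
    iSup₂_le fun i _ => (hW i).comap_le
  (measurable_traj_iSup_comap hstep x0 t).mono hle le_rfl

lemma indepFun_traj (hstep : Measurable (Function.uncurry step)) (hW : ∀ t, Measurable (W t))
    (hind : iIndepFun W μ) (x0 : X) (t : ℕ) :
    IndepFun (fun ω => traj step W x0 ω t) (W t) μ := by
  have h := indep_iSup_of_disjoint (fun i => (hW i).comap_le) hind.iIndep
    (S := Set.Iio t) (T := {t}) (by simp)
  rw [_root_.iSup_singleton] at h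
  rw [IndepFun_iff_Indep]
  exact indep_of_indep_of_le_left h (measurable_traj_iSup_comap hstep x0 t).comap_le

lemma lintegral_traj_le [IsProbabilityMeasure μ] (hstep : Measurable (Function.uncurry step))
    (hW : ∀ t, Measurable (W t)) (hlaw : ∀ t, μ.map (W t) = d) (hind : iIndepFun W μ)
    {V : X → ℝ≥0∞} (hV : Measurable V) {K : Set X} (hK : ∀ x ∈ K, ∀ n, step x n ∈ K)
    (hsuper : ∀ x ∈ K, ∫⁻ n, V (step x n) ∂d ≤ V x) {x0 : X} (hx0 : x0 ∈ K) (t : ℕ) :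
    ∫⁻ ω, V (traj step W x0 ω t) ∂μ ≤ V x0 := by
  induction t with
  | zero => simp [traj]
  | succ t ih =>
    calc ∫⁻ ω, V (traj step W x0 ω (t + 1)) ∂μ
        = ∫⁻ ω, ∫⁻ n, V (step (traj step W x0 ω t) n) ∂d ∂μ := by
          rw [← hlaw t]
          exact lintegral_comp_eq_lintegral_lintegral_of_indepFun
            (indepFun_traj hstep hW hind x0 t) (measurable_traj hstep hW x0 t) (hW t)
            (hV.comp hstep)
      _ ≤ ∫⁻ ω, V (traj step W x0 ω t) ∂μ :=
          lintegral_mono fun ω => hsuper _ (traj_mem hK hx0 ω t)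
      _ ≤ V x0 := ih

theorem measure_exists_hit_before_le_div [IsProbabilityMeasure μ] [IsProbabilityMeasure d]
    (hstep : Measurable (Function.uncurry step)) (hW : ∀ t, Measurable (W t))
    (hlaw : ∀ t, μ.map (W t) = d) (hind : iIndepFun W μ)
    {V : X → ℝ≥0∞} (hV : Measurable V) {K L P : Set X} (hL : MeasurableSet L)
    (hP : MeasurableSet P) (hK : ∀ x ∈ K, ∀ n, step x n ∈ K)
    (hsuper : ∀ x ∈ K, x ∉ L ∪ P → ∫⁻ n, V (step x n) ∂d ≤ V x)
    {c : ℝ≥0∞} (hc0 : c ≠ 0) (hc : c ≠ ∞) (hPc : ∀ x ∈ P, c ≤ V x) {x0 : X} (hx0 : x0 ∈ K) :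
    μ {ω | ∃ t, traj step W x0 ω t ∈ P ∧ ∀ s ≤ t, traj step W x0 ω s ∉ L} ≤ V x0 / c := by
  have hstep' := measurable_stoppedStep (hL.union hP) hstep
  have hmarkov : ∀ t, μ {ω | traj (stoppedStep step (L ∪ P)) W x0 ω t ∈ P} ≤ V x0 / c :=
    fun t => calc
      _ ≤ μ {ω | c ≤ V (traj (stoppedStep step (L ∪ P)) W x0 ω t)} :=
          measure_mono fun ω hω => hPc _ hω
      _ ≤ (∫⁻ ω, V (traj (stoppedStep step (L ∪ P)) W x0 ω t) ∂μ) / c :=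
          meas_ge_le_lintegral_div (hV.comp (measurable_traj hstep' hW x0 t)).aemeasurable hc0 hc
      _ ≤ V x0 / c := by
          gcongr
          exact lintegral_traj_le hstep' hW hlaw hind hV (stoppedStep_mem hK)
            (lintegral_stoppedStep_le hsuper) hx0 t
  calc _ ≤ μ (⋃ t, {ω | traj (stoppedStep step (L ∪ P)) W x0 ω t ∈ P}) :=
        measure_mono (setOf_exists_hit_subset_iUnion L P x0)
    _ = ⨆ t, μ {ω | traj (stoppedStep step (L ∪ P)) W x0 ω t ∈ P} :=
        (monotone_setOf_traj_stoppedStep_mem Set.subset_union_right x0).measure_iUnion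
    _ ≤ V x0 / c := iSup_le hmarkov

end NoiseDrivenChain

theorem stmt8_general {n : ℕ} {U Nsp Ω : Type*} [MeasurableSpace Nsp] [MeasurableSpace Ω]
    (μ : Measure Ω) [IsProbabilityMeasure μ] (d : Measure Nsp) [IsProbabilityMeasure d]
    (W : ℕ → Ω → Nsp) (hWmeas : ∀ t, Measurable (W t))
    (hWlaw : ∀ t, Measure.map (W t) μ = d)
    (hWindep : ProbabilityTheory.iIndepFun W μ)
    (Xset : Set (Fin n → ℝ))
    (f : (Fin n → ℝ) → U → Nsp → (Fin n → ℝ)) (π : (Fin n → ℝ) → U)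
    (step : (Fin n → ℝ) → Nsp → (Fin n → ℝ)) (hstepdef : ∀ x ωn, step x ωn = f x (π x) ωn)
    (hstepmeas : Measurable (Function.uncurry step))
    (V : (Fin n → ℝ) → ℝ) (hVmeas : Measurable V)
    (ε M δ Δ LV : ℝ) (hε : 0 < ε) (hδ : 0 < δ)
    -- the system does not leave the state space, and has bounded maximal step size Δ
    (hclosed : ∀ x ∈ Xset, ∀ ωn : Nsp, f x (π x) ωn ∈ Xset)
    -- integrability of the one-step expectation
    (hVint : ∀ x ∈ Xset, Integrable (fun ωn => V (f x (π x) ωn)) d)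
    -- sRSM condition 1: nonnegativity
    (hnn : ∀ x ∈ Xset, 0 ≤ V x)
    -- sRSM condition 2: strict expected decrease where `V ≥ M`
    (hdec : ∀ x ∈ Xset, M ≤ V x → ∫ ωn, V (f x (π x) ωn) ∂d ≤ V x - ε)
    (x1 : Fin n → ℝ) (hx1 : x1 ∈ Xset) (hx1hi : V x1 ≤ M + LV * Δ) :
    μ {ω | ∃ t2, M + LV * Δ + δ ≤ V (traj step W x1 ω t2) ∧
        ∀ t ≤ t2, ¬ V (traj step W x1 ω t) ≤ M}
      ≤ ENNReal.ofReal ((M + LV * Δ) / (M + LV * Δ + δ)) := by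
  have hlam : 0 < M + LV * Δ + δ := by linarith [hnn x1 hx1]
  have hsuper : ∀ x ∈ Xset, x ∉ {x | V x ≤ M} ∪ {x | M + LV * Δ + δ ≤ V x} →
      ∫⁻ ωn, ENNReal.ofReal (V (step x ωn)) ∂d ≤ ENNReal.ofReal (V x) := by
    intro x hx hxS
    have hMx : M ≤ V x := (lt_of_not_ge fun h => hxS (Or.inl h)).le
    simp only [hstepdef]
    rw [← ofReal_integral_eq_lintegral_ofReal (hVint x hx)
      (ae_of_all _ fun ωn => hnn _ (hclosed x hx ωn))]
    exact ENNReal.ofReal_le_ofReal ((hdec x hx hMx).trans (by linarith))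
  calc _ ≤ ENNReal.ofReal (V x1) / ENNReal.ofReal (M + LV * Δ + δ) :=
        measure_exists_hit_before_le_div hstepmeas hWmeas hWlaw hWindep
          (ENNReal.measurable_ofReal.comp hVmeas) (hVmeas measurableSet_Iic)
          (hVmeas measurableSet_Ici) (fun x hx ωn => hstepdef x ωn ▸ hclosed x hx ωn) hsuper
          (ENNReal.ofReal_pos.mpr hlam).ne' ENNReal.ofReal_ne_top
          (fun x hx => ENNReal.ofReal_le_ofReal hx) hx1
    _ ≤ ENNReal.ofReal (M + LV * Δ) / ENNReal.ofReal (M + LV * Δ + δ) := by gcongr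
    _ = ENNReal.ofReal ((M + LV * Δ) / (M + LV * Δ + δ)) := (ENNReal.ofReal_div_of_pos hlam).symm

/-- Starting from a state `x_1` with `M < V(x_1) ≤ M + L_V·Δ`, the probability that the
trajectory ever reaches a state with `V ≥ M + L_V·Δ + δ` before reaching `S = {V ≤ M}` is at
most `(M + L_V·Δ)/(M + L_V·Δ + δ)`. -/
theorem stmt8 {n : ℕ} {U Nsp Ω : Type*} [MeasurableSpace Nsp] [MeasurableSpace Ω]
    (μ : Measure Ω) [IsProbabilityMeasure μ] (d : Measure Nsp) [IsProbabilityMeasure d]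
    (W : ℕ → Ω → Nsp) (hWmeas : ∀ t, Measurable (W t))
    (hWlaw : ∀ t, Measure.map (W t) μ = d)
    (hWindep : ProbabilityTheory.iIndepFun W μ)
    (Xset Xs : Set (Fin n → ℝ)) (hXmeas : MeasurableSet Xset) (hXsmeas : MeasurableSet Xs)
    (hXs : Xs ⊆ Xset)
    (f : (Fin n → ℝ) → U → Nsp → (Fin n → ℝ)) (π : (Fin n → ℝ) → U)
    (step : (Fin n → ℝ) → Nsp → (Fin n → ℝ)) (hstepdef : ∀ x ωn, step x ωn = f x (π x) ωn)
    (hstepmeas : Measurable (Function.uncurry step))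
    (V : (Fin n → ℝ) → ℝ) (hVmeas : Measurable V)
    (ε M δ Δ LV : ℝ) (hε : 0 < ε) (hM : 0 < M) (hδ : 0 < δ) (hΔ : 0 < Δ) (hLV : 0 < LV)
    -- the system does not leave the state space, and has bounded maximal step size Δ
    (hclosed : ∀ x ∈ Xset, ∀ ωn : Nsp, f x (π x) ωn ∈ Xset)
    (hstepbd : ∀ x ∈ Xset, ∀ ωn : Nsp, l1norm (x - f x (π x) ωn) ≤ Δ)
    -- `V` is Lipschitz continuous with constant `L_V`
    (hVlip : ∀ x ∈ Xset, ∀ y ∈ Xset, |V x - V y| ≤ LV * l1norm (x - y))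
    -- integrability of the one-step expectation
    (hVint : ∀ x ∈ Xset, Integrable (fun ωn => V (f x (π x) ωn)) d)
    -- sRSM condition 1: nonnegativity
    (hnn : ∀ x ∈ Xset, 0 ≤ V x)
    -- sRSM condition 2: strict expected decrease where `V ≥ M`
    (hdec : ∀ x ∈ Xset, M ≤ V x → ∫ ωn, V (f x (π x) ωn) ∂d ≤ V x - ε)
    -- sRSM condition 3: lower bound outside `X_s`
    (hout : ∀ x ∈ Xset, x ∉ Xs → M + LV * Δ + δ ≤ V x)
    (x1 : Fin n → ℝ) (hx1 : x1 ∈ Xset) (hx1lo : M < V x1) (hx1hi : V x1 ≤ M + LV * Δ) :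
    μ {ω | ∃ t2, M + LV * Δ + δ ≤ V (traj step W x1 ω t2) ∧
        ∀ t ≤ t2, ¬ V (traj step W x1 ω t) ≤ M}
      ≤ ENNReal.ofReal ((M + LV * Δ) / (M + LV * Δ + δ)) :=
  stmt8_general μ d W hWmeas hWlaw hWindep Xset f π step hstepdef hstepmeas V hVmeas ε M δ Δ LV hε
    hδ hclosed hVint hnn hdec x1 hx1 hx1hi
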